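/- arXiv:2604.14083 — 2 statements merged into one kernel-verified Lean document; each statement's English description precedes it below -/
import Mathlib

section
/- If two finite multisets of positive reals {l_1,…,l_n} and {l'_1,…,l'_n} satisfy ∏_{j=1}^n sinc(2π l_j ξ) = ∏_{j=1}^n sinc(2π l'_j ξ) for all ξ ∈ ℝ, then the multisets are equal. -/
/-!
Let `M` be the largest of the `l_j`. At `ξ = 1 / (2M)` the factor `sinc(2π M ξ) = sinc π` vanishes,
so some factor `sinc(π l'_k / M)` of the other product vanishes too, which forces `l'_k ≥ M` since
`sinc` has no zero in `(0, π)`. By symmetry both families have the same maximum. Cancelling the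
common factor leaves two continuous functions agreeing off the countable zero set of that factor,
hence everywhere, and induction on the number of factors finishes the argument.
-/

open Real

noncomputable def sinc (x : ℝ) : ℝ := if x = 0 then 1 else Real.sin x / x

lemma sinc_eq_real_sinc : _root_.sinc = Real.sinc := rfl

namespace Real

lemma sinc_pi : sinc π = 0 := by
  rw [sinc_of_ne_zero pi_ne_zero, sin_pi, zero_div]

lemma sinc_pos_of_pos_of_lt_pi {x : ℝ} (hx0 : 0 < x) (hxπ : x < π) : 0 < sinc x := by
  rw [sinc_of_ne_zero hx0.ne']
  exact div_pos (sin_pos_of_pos_of_lt_pi hx0 hxπ) hx0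

lemma one_le_of_sinc_pi_mul_eq_zero {x : ℝ} (hx : 0 < x) (h : sinc (π * x) = 0) : 1 ≤ x := by
  by_contra! hx1
  refine (sinc_pos_of_pos_of_lt_pi (by positivity) ?_).ne' h
  simpa using mul_lt_mul_of_pos_left hx1 pi_pos

lemma countable_setOf_sinc_eq_zero : {x | sinc x = 0}.Countable := by
  refine (Set.countable_range fun n : ℤ => (n : ℝ) * π).mono fun x hx => ?_
  have hx0 : x ≠ 0 := by
    rintro rfl
    simp at hx
  rw [Set.mem_ofPred, sinc_of_ne_zero hx0, div_eq_zero_iff, or_iff_left hx0, sin_eq_zero_iff] at hx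
  exact hx

end Real

noncomputable def sincProd (s : Multiset ℝ) (ξ : ℝ) : ℝ :=
  (s.map fun a => Real.sinc (a * ξ)).prod

lemma sincProd_cons (a : ℝ) (s : Multiset ℝ) (ξ : ℝ) :
    sincProd (a ::ₘ s) ξ = Real.sinc (a * ξ) * sincProd s ξ := by
  simp only [sincProd, Multiset.map_cons, Multiset.prod_cons]

lemma continuous_sincProd (s : Multiset ℝ) : Continuous (sincProd s) :=
  continuous_multiset_prod _ fun _ _ => by fun_prop

lemma sincProd_eq_zero_iff {s : Multiset ℝ} {ξ : ℝ} :
    sincProd s ξ = 0 ↔ ∃ a ∈ s, Real.sinc (a * ξ) = 0 := by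
  simp [sincProd, Multiset.prod_eq_zero_iff]

lemma exists_le_of_sincProd_eq {s t : Multiset ℝ} {a : ℝ} (h : sincProd s = sincProd t)
    (ht : ∀ b ∈ t, 0 < b) (ha : a ∈ s) (ha0 : 0 < a) : ∃ b ∈ t, a ≤ b := by
  have hs_zero : sincProd s (π / a) = 0 :=
    sincProd_eq_zero_iff.2 ⟨a, ha, by rw [mul_div_cancel₀ _ ha0.ne', sinc_pi]⟩
  obtain ⟨b, hb, hb0⟩ := sincProd_eq_zero_iff.1 (h ▸ hs_zero)
  refine ⟨b, hb, ?_⟩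
  have hba : 1 ≤ b / a :=
    one_le_of_sinc_pi_mul_eq_zero (div_pos (ht b hb) ha0) (by rwa [mul_div_left_comm])
  rwa [one_le_div ha0] at hba

/-- The two sides agree off the countable, hence co-dense, zero set of `ξ ↦ sinc (a * ξ)`. -/
lemma sincProd_eq_of_cons_eq {a : ℝ} {s t : Multiset ℝ} (ha : a ≠ 0)
    (h : sincProd (a ::ₘ s) = sincProd (a ::ₘ t)) : sincProd s = sincProd t := by
  have hzeros : {ξ | Real.sinc (a * ξ) = 0}.Countable :=
    countable_setOf_sinc_eq_zero.preimage (mul_right_injective₀ ha)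
  refine (continuous_sincProd s).ext_on (hzeros.dense_compl ℝ) (continuous_sincProd t)
    fun ξ hξ => mul_left_cancel₀ hξ ?_
  simpa only [sincProd_cons] using congrFun h ξ

theorem eq_of_sincProd_eq {s t : Multiset ℝ} (hs : ∀ a ∈ s, 0 < a) (ht : ∀ b ∈ t, 0 < b)
    (h : sincProd s = sincProd t) : s = t := by
  induction s using Multiset.strongInductionOn generalizing t with
  | ih s ih =>
  rcases eq_or_ne s 0 with rfl | hs0
  · refine (Multiset.eq_zero_of_forall_notMem fun b hb => ?_).symm
    obtain ⟨a, ha, -⟩ := exists_le_of_sincProd_eq h.symm (by simp) hb (ht b hb)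
    simp at ha
  obtain ⟨M, hM, hMmax⟩ := Multiset.exists_max_image id hs0
  obtain ⟨b, hb, hMb⟩ := exists_le_of_sincProd_eq h ht hM (hs M hM)
  obtain ⟨M', hM', hM'max⟩ := Multiset.exists_max_image id (s := t) (by rintro rfl; simp at hb)
  obtain ⟨c, hc, hM'c⟩ := exists_le_of_sincProd_eq h.symm hs hM' (ht M' hM')
  have hMt : M ∈ t := by
    rwa [le_antisymm (hMb.trans (hM'max b hb)) (hM'c.trans (hMmax c hc))]
  rw [← Multiset.cons_erase hM, ← Multiset.cons_erase hMt] at h ⊢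
  rw [ih _ (Multiset.erase_lt.2 hM) (fun a ha => hs a (Multiset.mem_of_mem_erase ha))
    (fun b hb => ht b (Multiset.mem_of_mem_erase hb)) (sincProd_eq_of_cons_eq (hs M hM).ne' h)]

lemma exists_perm_apply_eq_of_map_univ_eq {α : Type*} [LinearOrder α] {n : ℕ} {f g : Fin n → α}
    (h : Finset.univ.val.map f = Finset.univ.val.map g) :
    ∃ σ : Equiv.Perm (Fin n), ∀ j, g (σ j) = f j := by
  rw [Fin.univ_val_map, Fin.univ_val_map, Multiset.coe_eq_coe] at h
  have hsorted : f ∘ Tuple.sort f = g ∘ Tuple.sort g :=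
    List.ofFn_injective <| List.Perm.eq_of_sortedLE
      (Tuple.monotone_sort f).sortedLE_ofFn (Tuple.monotone_sort g).sortedLE_ofFn
      (((Tuple.sort f).ofFn_comp_perm f).trans h |>.trans ((Tuple.sort g).ofFn_comp_perm g).symm)
  refine ⟨(Tuple.sort f).symm.trans (Tuple.sort g), fun j => ?_⟩
  simpa using (congrFun hsorted ((Tuple.sort f).symm j)).symm

/-- If two products of `sinc(2π l_j ξ)` with positive parameters agree for all real `ξ`,
then the multisets of parameters coincide (i.e. they agree up to a permutation). -/
theorem sinc_prod_determines_multiset (n : ℕ) (l l' : Fin n → ℝ)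
    (hl : ∀ j, 0 < l j) (hl' : ∀ j, 0 < l' j)
    (h : ∀ ξ : ℝ, ∏ j, _root_.sinc (2 * π * l j * ξ) = ∏ j, _root_.sinc (2 * π * l' j * ξ)) :
    ∃ σ : Equiv.Perm (Fin n), ∀ j, l' (σ j) = l j := by
  have hprod (k : Fin n → ℝ) (ξ : ℝ) :
      ∏ j, _root_.sinc (2 * π * k j * ξ) = sincProd (Finset.univ.val.map (2 * π * k ·)) ξ := by
    simp [sincProd, Finset.prod_eq_multiset_prod, sinc_eq_real_sinc, Function.comp_def]
  have hpos (k : Fin n → ℝ) (hk : ∀ j, 0 < k j) : ∀ a ∈ Finset.univ.val.map (2 * π * k ·), 0 < a := by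
    simpa using fun j => mul_pos two_pi_pos (hk j)
  obtain ⟨σ, hσ⟩ := exists_perm_apply_eq_of_map_univ_eq <|
    eq_of_sincProd_eq (hpos l hl) (hpos l' hl') (funext fun ξ => by rw [← hprod, ← hprod, h])
  exact ⟨σ, fun j => mul_left_cancel₀ two_pi_pos.ne' (hσ j)⟩
end

section
/- The convolution of n uniform distributions Unif(b_j − l_j, b_j + l_j), j = 1,…,n, uniquely determines the multiset of widths {l_1, …, l_n} and the sum of shifts ∑_{j=1}^n b_j: if two such convolutions (with the same n) are equal as probability measures, then the multisets {l_j} and {l'_j} coincide and ∑ b_j = ∑ b'_j. -/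
/-! The moment generating function of `Unif(b - l, b + l)` is `exp (t b) * sinh (t l) / (t l)`, so
for `t > 0` the logarithm of the moment generating function of the convolution is
`(∑ b_j + ∑ l_j) t - ∑ log (2 t l_j) + ∑ log (1 - exp (-2 t l_j))`.
The last sum tends to `0` at `+∞`, so equal convolutions have equal slopes `∑ b_j + ∑ l_j`,
equal constants `∑ log l_j` and equal last sums. After multiplication by `exp (2 a t)`, with `a`
the smallest width occurring, the last sum tends to minus the multiplicity of `a`; hence the
functions `t ↦ log (1 - exp (-(t x)))`, `x > 0`, are linearly independent near `+∞`, and the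
multiplicity of every width is determined. -/

open MeasureTheory Set

/-- The uniform probability measure on `[b-l, b+l]`. -/
noncomputable def unif (b l : ℝ) : Measure ℝ :=
  (ENNReal.ofReal (2 * l))⁻¹ • volume.restrict (Set.Icc (b - l) (b + l))

open Filter Topology Real
open scoped Finset

lemma isProbabilityMeasure_unif (b : ℝ) {l : ℝ} (hl : 0 < l) : IsProbabilityMeasure (unif b l) := by
  constructor
  rw [unif, Measure.smul_apply, Measure.restrict_apply MeasurableSet.univ, univ_inter,
    volume_Icc, smul_eq_mul, show b + l - (b - l) = 2 * l by ring,
    ENNReal.inv_mul_cancel (by positivity) ENNReal.ofReal_ne_top]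

lemma integral_exp_mul_unif (b : ℝ) {l t : ℝ} (hl : 0 < l) (ht : t ≠ 0) :
    ∫ x, exp (t * x) ∂unif b l = exp (t * b) * (sinh (t * l) / (t * l)) := by
  have hderiv (x : ℝ) : HasDerivAt (fun y => exp (t * y) / t) (exp (t * x)) x := by
    simpa [ht] using (((hasDerivAt_id x).const_mul t).exp).div_const t
  rw [unif, integral_smul_measure, integral_Icc_eq_integral_Ioc,
    ← intervalIntegral.integral_of_le (by linarith),
    intervalIntegral.integral_eq_sub_of_hasDerivAt (fun x _ => hderiv x)
      (by apply Continuous.intervalIntegrable; fun_prop),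
    ENNReal.toReal_inv, ENNReal.toReal_ofReal (by positivity), sinh_eq, smul_eq_mul,
    show t * (b + l) = t * b + t * l by ring, show t * (b - l) = t * b - t * l by ring,
    exp_add, exp_sub, exp_neg]
  field_simp

lemma integral_exp_mul_map_sum_pi {ι : Type*} [Fintype ι] (μ : ι → Measure ℝ)
    [∀ i, SigmaFinite (μ i)] (t : ℝ) :
    ∫ y, exp (t * y) ∂(Measure.pi μ).map (fun x => ∑ i, x i) = ∏ i, ∫ x, exp (t * x) ∂μ i := by
  rw [integral_map (by fun_prop) (by fun_prop), ← integral_fintype_prod_eq_prod]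
  simp_rw [Finset.mul_sum, exp_sum]

lemma integral_exp_mul_map_sum_unif {ι : Type*} [Fintype ι] (b : ι → ℝ) {l : ι → ℝ}
    (hl : ∀ i, 0 < l i) {t : ℝ} (ht : t ≠ 0) :
    ∫ y, exp (t * y) ∂(Measure.pi fun i => unif (b i) (l i)).map (fun x => ∑ i, x i)
      = exp (t * ∑ i, b i) * ∏ i, sinh (t * l i) / (t * l i) := by
  have := fun i => isProbabilityMeasure_unif (b i) (hl i)
  simp only [integral_exp_mul_map_sum_pi, integral_exp_mul_unif _ (hl _) ht,
    Finset.prod_mul_distrib, ← exp_sum, Finset.mul_sum]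

lemma log_sinh_div_self {y : ℝ} (hy : 0 < y) :
    log (sinh y / y) = y + log (1 - exp (-(2 * y))) - log (2 * y) := by
  have hfactor : sinh y / y = exp y * (1 - exp (-(2 * y))) / (2 * y) := by
    rw [sinh_eq, mul_sub, mul_one, ← exp_add]
    field_simp
    ring_nf
  have hpos : 0 < 1 - exp (-(2 * y)) := by
    rw [sub_pos, exp_lt_one_iff]; linarith
  rw [hfactor, log_div (by positivity) (by positivity), log_mul (exp_ne_zero _) hpos.ne', log_exp]

lemma log_exp_mul_prod_sinh_div {ι : Type*} [Fintype ι] (B : ℝ) {l : ι → ℝ} (hl : ∀ i, 0 < l i)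
    {t : ℝ} (ht : 0 < t) :
    log (exp (t * B) * ∏ i, sinh (t * l i) / (t * l i))
      = (B + ∑ i, l i) * t + ∑ i, log (1 - exp (-(2 * t * l i)))
        - (Fintype.card ι * log (2 * t) + ∑ i, log (l i)) := by
  have hpos (i : ι) : 0 < sinh (t * l i) / (t * l i) := by
    have := mul_pos ht (hl i)
    exact div_pos (sinh_pos_iff.mpr this) this
  rw [log_mul (exp_ne_zero _) (Finset.prod_pos fun i _ => hpos i).ne', log_exp,
    log_prod fun i _ => (hpos i).ne']
  simp only [log_sinh_div_self (mul_pos ht (hl _)), ← mul_assoc,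
    log_mul (by positivity : 2 * t ≠ 0) (hl _).ne', Finset.sum_add_distrib, Finset.sum_sub_distrib,
    Finset.sum_const, Finset.card_univ, nsmul_eq_mul, ← Finset.mul_sum]
  ring

lemma tendsto_log_one_sub_div_self :
    Tendsto (fun u : ℝ => log (1 - u) / u) (𝓝[≠] 0) (𝓝 (-1)) := by
  have hd : HasDerivAt (fun u : ℝ => log (1 - u)) (-1) 0 := by
    simpa using ((hasDerivAt_id (0 : ℝ)).const_sub 1).log (by norm_num)
  refine (hasDerivAt_iff_tendsto_slope.mp hd).congr' ?_
  filter_upwards [self_mem_nhdsWithin] with u hu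
  simp [slope_def_field]

lemma tendsto_exp_neg_mul_nhdsNE_zero {x : ℝ} (hx : 0 < x) :
    Tendsto (fun t => exp (-(t * x))) atTop (𝓝[≠] 0) := by
  refine tendsto_nhdsWithin_of_tendsto_nhds_of_eventually_within _ ?_
    (Eventually.of_forall fun t => (exp_pos _).ne')
  exact tendsto_exp_atBot.comp (tendsto_neg_atTop_atBot.comp
    (tendsto_id.atTop_mul_const hx))

lemma tendsto_exp_mul_log_one_sub_exp_self {x : ℝ} (hx : 0 < x) :
    Tendsto (fun t => exp (x * t) * log (1 - exp (-(t * x)))) atTop (𝓝 (-1)) := by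
  refine (tendsto_log_one_sub_div_self.comp (tendsto_exp_neg_mul_nhdsNE_zero hx)).congr fun t => ?_
  rw [Function.comp_apply, div_eq_inv_mul, ← exp_neg, neg_neg, mul_comm t x]

lemma tendsto_exp_mul_log_one_sub_exp_of_lt {a x : ℝ} (hx : 0 < x) (hax : a < x) :
    Tendsto (fun t => exp (a * t) * log (1 - exp (-(t * x)))) atTop (𝓝 0) := by
  have hdecay : Tendsto (fun t => exp ((a - x) * t)) atTop (𝓝 0) :=
    tendsto_exp_atBot.comp (tendsto_id.const_mul_atTop_of_neg (sub_neg.mpr hax))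
  simpa using ((tendsto_exp_mul_log_one_sub_exp_self hx).mul hdecay).congr fun t => by
    rw [mul_right_comm, ← exp_add]; ring_nf

lemma tendsto_log_one_sub_exp_neg_mul {x : ℝ} (hx : 0 < x) :
    Tendsto (fun t => log (1 - exp (-(t * x)))) atTop (𝓝 0) := by
  simpa using (tendsto_exp_mul_log_one_sub_exp_of_lt hx hx).congr fun t => by simp

lemma tendsto_sum_log_one_sub_exp_neg_mul {ι : Type*} [Fintype ι] {l : ι → ℝ}
    (hl : ∀ i, 0 < l i) : Tendsto (fun t => ∑ i, log (1 - exp (-(t * l i)))) atTop (𝓝 0) := by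
  simpa using tendsto_finsetSum Finset.univ fun i _ => tendsto_log_one_sub_exp_neg_mul (hl i)

lemma eq_zero_of_sum_mul_log_one_sub_exp_eq_zero {S : Finset ℝ} (hS : ∀ x ∈ S, 0 < x)
    {c : ℝ → ℝ} (h : ∀ᶠ t in atTop, ∑ x ∈ S, c x * log (1 - exp (-(t * x))) = 0) :
    ∀ x ∈ S, c x = 0 := by
  induction S using Finset.induction_on_min with
  | empty => simp
  | insert a s ha ih =>
    have has : a ∉ s := fun h => lt_irrefl a (ha a h)
    simp only [Finset.mem_insert, forall_eq_or_imp] at hS ⊢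
    simp only [Finset.sum_insert has] at h
    have hlim : Tendsto (fun t => exp (a * t) * (c a * log (1 - exp (-(t * a))) +
        ∑ x ∈ s, c x * log (1 - exp (-(t * x))))) atTop (𝓝 (c a * -1 + ∑ x ∈ s, c x * 0)) := by
      simp only [mul_add, Finset.mul_sum, mul_left_comm (exp _)]
      exact ((tendsto_exp_mul_log_one_sub_exp_self hS.1).const_mul _).add
        (tendsto_finsetSum _ fun x hx =>
          (tendsto_exp_mul_log_one_sub_exp_of_lt (hS.2 x hx) (ha x hx)).const_mul _)
    have hca : c a = 0 := by
      have hzero := tendsto_nhds_unique hlim <| tendsto_const_nhds.congr' <|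
        h.mono fun t ht => show (0 : ℝ) = _ by simp only [ht, mul_zero]
      simpa using hzero
    refine ⟨hca, ih hS.2 ?_⟩
    simpa [hca] using h

lemma exists_perm_of_sum_log_one_sub_exp_eq {ι : Type*} [Fintype ι] {l l' : ι → ℝ}
    (hl : ∀ i, 0 < l i) (hl' : ∀ i, 0 < l' i)
    (h : ∀ᶠ t in atTop, ∑ i, log (1 - exp (-(t * l i))) = ∑ i, log (1 - exp (-(t * l' i)))) :
    ∃ σ : Equiv.Perm ι, ∀ i, l' (σ i) = l i := by
  classical
  set S := Finset.univ.image l ∪ Finset.univ.image l'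
  have hS : ∀ x ∈ S, 0 < x := by
    simp only [S, Finset.mem_union, Finset.mem_image, Finset.mem_univ, true_and]
    rintro x (⟨i, rfl⟩ | ⟨i, rfl⟩) <;> simp [hl, hl']
  have hfiber (w : ι → ℝ) (hw : ∀ i, w i ∈ S) (t : ℝ) : ∑ i, log (1 - exp (-(t * w i))) =
      ∑ x ∈ S, (#{i | w i = x} : ℝ) * log (1 - exp (-(t * x))) := by
    rw [← Finset.sum_fiberwise_of_maps_to' (fun i _ => hw i) fun x => log (1 - exp (-(t * x)))]
    simp only [Finset.sum_const, nsmul_eq_mul]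
  have hcoeff := eq_zero_of_sum_mul_log_one_sub_exp_eq_zero hS
    (c := fun x => (#{i | l i = x} : ℝ) - #{i | l' i = x}) <| h.mono fun t ht => by
      simp only [sub_mul, Finset.sum_sub_distrib]
      rw [← hfiber l (by simp [S]), ← hfiber l' (by simp [S]), ht, sub_self]
  have hcard (x : ℝ) : Fintype.card {i // l i = x} = Fintype.card {i // l' i = x} := by
    simp only [Fintype.card_subtype]
    by_cases hx : x ∈ S
    · exact_mod_cast sub_eq_zero.mp (hcoeff x hx)
    · simp only [S, Finset.mem_union, Finset.mem_image, Finset.mem_univ, true_and, not_or,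
        not_exists] at hx
      simp [hx.1, hx.2]
  exact ⟨Equiv.ofFiberEquiv fun x => Fintype.equivOfCardEq (hcard x),
    Equiv.ofFiberEquiv_map _⟩

lemma eq_of_eventually_add_mul_add_eq {a b a' b' : ℝ} {f g : ℝ → ℝ}
    (hf : Tendsto f atTop (𝓝 0)) (hg : Tendsto g atTop (𝓝 0))
    (h : ∀ᶠ t in atTop, a * t + b + f t = a' * t + b' + g t) : a = a' ∧ b = b' := by
  have hdiff : Tendsto (fun t => (a - a') * t + (b - b')) atTop (𝓝 0) := by
    simpa using (hg.sub hf).congr' (h.mono fun t ht => by linarith)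
  have hslope : Tendsto (fun _ : ℝ => a - a') atTop (𝓝 0) := by
    have hshift := (hdiff.comp (tendsto_atTop_add_const_right _ 1 tendsto_id)).sub hdiff
    rw [sub_zero] at hshift
    exact hshift.congr fun t => by simp only [Function.comp_apply, id]; ring
  obtain rfl : a = a' := sub_eq_zero.mp (tendsto_const_nhds_iff.mp hslope)
  exact ⟨rfl, sub_eq_zero.mp (by simpa using hdiff)⟩

/-- The convolution of `n` uniform distributions (the law of the sum of `n` independent
uniform random variables) determines the multiset of widths and the sum of the shifts. -/
theorem conv_uniform_identifies (n : ℕ) (b l b' l' : Fin n → ℝ)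
    (hl : ∀ j, 0 < l j) (hl' : ∀ j, 0 < l' j)
    (h : Measure.map (fun x : Fin n → ℝ => ∑ j, x j) (Measure.pi fun j => unif (b j) (l j))
       = Measure.map (fun x : Fin n → ℝ => ∑ j, x j) (Measure.pi fun j => unif (b' j) (l' j))) :
    (∃ σ : Equiv.Perm (Fin n), ∀ j, l' (σ j) = l j) ∧ (∑ j, b j = ∑ j, b' j) := by
  have hlog : ∀ᶠ t in atTop,
      (∑ j, b j + ∑ j, l j) * t + -∑ j, log (l j) + ∑ j, log (1 - exp (-(2 * t * l j)))
        = (∑ j, b' j + ∑ j, l' j) * t + -∑ j, log (l' j)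
          + ∑ j, log (1 - exp (-(2 * t * l' j))) := by
    filter_upwards [eventually_gt_atTop 0] with t ht
    have := congrArg (fun μ => log (∫ y, exp (t * y) ∂μ)) h
    simp only [integral_exp_mul_map_sum_unif _ hl ht.ne',
      integral_exp_mul_map_sum_unif _ hl' ht.ne', log_exp_mul_prod_sinh_div _ hl ht,
      log_exp_mul_prod_sinh_div _ hl' ht] at this
    linarith
  have htail {w : Fin n → ℝ} (hw : ∀ j, 0 < w j) :=
    (tendsto_sum_log_one_sub_exp_neg_mul hw).comp (tendsto_id.const_mul_atTop two_pos)
  obtain ⟨hshift, hlogl⟩ := eq_of_eventually_add_mul_add_eq (htail hl) (htail hl') hlog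
  obtain ⟨σ, hσ⟩ : ∃ σ : Equiv.Perm (Fin n), ∀ j, l' (σ j) = l j := by
    refine exists_perm_of_sum_log_one_sub_exp_eq hl hl' ?_
    filter_upwards [(tendsto_id.atTop_div_const two_pos).eventually hlog] with t ht
    simpa only [id, hshift, hlogl, add_right_inj, mul_div_cancel₀ t two_ne_zero] using ht
  refine ⟨⟨σ, hσ⟩, ?_⟩
  have hwidths : ∑ j, l' j = ∑ j, l j := by
    simp only [← hσ, Equiv.sum_comp σ l']
  linarith
end
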